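/- arXiv:1203.0378 — 5 statements merged into one kernel-verified Lean document; each statement's English description precedes it below -/
import Mathlib

section
/- In an n-dimensional Einstein like (ε)-para Sasakian manifold, the constants satisfy εa + c = 1 − n. -/
theorem einstein_like_epsPS_a_c_general {V : Type*} [AddCommGroup V] [Module ℝ V]
    (φ : V →ₗ[ℝ] V) (ξ : V) (η : V →ₗ[ℝ] ℝ) (g : LinearMap.BilinForm ℝ V)
    (ε : ℝ) (n : ℕ)
    (hηξ : η ξ = 1) (hφξ : φ ξ = 0)
    (hgξ : ∀ X, g X ξ = ε * η X)
    -- in an (ε)-para Sasakian manifold, S(X, ξ) = −(n−1) η(X)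
    (S : V → V → ℝ)
    (hSξ : ∀ X, S X ξ = -((n : ℝ) - 1) * η X)
    (a b c : ℝ)
    (hS : ∀ X Y, S X Y = a * g X Y + b * g (φ X) Y + c * η X * η Y) :
    ε * a + c = 1 - (n : ℝ) := by
  calc ε * a + c = S ξ ξ := by
        rw [hS, hgξ, hφξ, hηξ, map_zero, LinearMap.zero_apply]; ring
    _ = 1 - n := by rw [hSξ, hηξ]; ring

/-- In an n-dimensional Einstein like (ε)-para Sasakian manifold,
`εa + c = 1 − n`. -/
theorem einstein_like_epsPS_a_c {V : Type*} [AddCommGroup V] [Module ℝ V]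
    (φ : V →ₗ[ℝ] V) (ξ : V) (η : V →ₗ[ℝ] ℝ) (g : LinearMap.BilinForm ℝ V)
    (ε : ℝ) (hε : ε = 1 ∨ ε = -1) (n : ℕ)
    (hsym : ∀ X Y, g X Y = g Y X)
    (hφ2 : ∀ X, φ (φ X) = X - η X • ξ)
    (hηξ : η ξ = 1) (hφξ : φ ξ = 0) (hηφ : ∀ X, η (φ X) = 0)
    (hmetric : ∀ X Y, g (φ X) (φ Y) = g X Y - ε * η X * η Y)
    (hgξ : ∀ X, g X ξ = ε * η X)
    -- (ε)-para Sasakian condition: (∇_X φ)Y = −g(φX, φY)ξ − ε η(Y) φ²X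
    (nabla : V → V → V)
    (hPS : ∀ X Y, nabla X (φ Y) - φ (nabla X Y) = -(g (φ X) (φ Y)) • ξ - (ε * η Y) • φ (φ X))
    -- in an (ε)-para Sasakian manifold, S(X, ξ) = −(n−1) η(X)
    (S : V → V → ℝ)
    (hSξ : ∀ X, S X ξ = -((n : ℝ) - 1) * η X)
    (a b c : ℝ)
    (hS : ∀ X Y, S X Y = a * g X Y + b * g (φ X) Y + c * η X * η Y) :
    ε * a + c = 1 - (n : ℝ) :=
  einstein_like_epsPS_a_c_general φ ξ η g ε n hηξ hφξ hgξ S hSξ a b c hS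
end

section
/- In an Einstein like (ε)-para Sasakian manifold, the Ricci operator Q satisfies (∇_Y Q)X = −εb η(X)Y + c η(X)φY − ( b g(X,Y) − 2εb η(X)η(Y) − εc g(φX,Y) ) ξ for all vector fields X, Y. -/
/-! The claim is a pointwise identity: expand `∇Q` by the Leibniz rule and the (ε)-para Sasakian
formulas for `∇φ`, `∇η`, `∇ξ`, and simplify with `φ² = I - η ⊗ ξ`, `ε² = 1` and the fact that
`φ` is `g`-self-adjoint, which is what turns `g(φY, X)` into `g(φX, Y)`. -/

theorem LinearMap.BilinForm.isSelfAdjoint_of_paracontact_metric {R M : Type*} [CommRing R]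
    [AddCommGroup M] [Module R M] {φ : M →ₗ[R] M} {ξ : M} {η : M →ₗ[R] R}
    {g : LinearMap.BilinForm R M} {ε : R}
    (hsym : ∀ X Y, g X Y = g Y X)
    (hφ2 : ∀ X, φ (φ X) = X - η X • ξ)
    (hηφ : ∀ X, η (φ X) = 0)
    (hmetric : ∀ X Y, g (φ X) (φ Y) = g X Y - ε * η X * η Y)
    (hgξ : ∀ X, g X ξ = ε * η X) :
    LinearMap.IsSelfAdjoint g φ := by
  intro X Y
  calc g (φ X) Y = g (φ (φ X)) (φ Y) := by rw [hmetric, hηφ]; ring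
    _ = g X (φ Y) := by
      rw [hφ2, LinearMap.BilinForm.sub_left, LinearMap.BilinForm.smul_left, hsym ξ, hgξ, hηφ]
      ring

theorem einstein_like_epsPS_nabla_Q_general {V : Type*} [AddCommGroup V] [Module ℝ V]
    (φ : V →ₗ[ℝ] V) (ξ : V) (η : V →ₗ[ℝ] ℝ) (g : LinearMap.BilinForm ℝ V)
    (ε : ℝ) (hε : ε = 1 ∨ ε = -1)
    (hsym : ∀ X Y, g X Y = g Y X)
    (hφ2 : ∀ X, φ (φ X) = X - η X • ξ)
    (hηφ : ∀ X, η (φ X) = 0)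
    (hmetric : ∀ X Y, g (φ X) (φ Y) = g X Y - ε * η X * η Y)
    (hgξ : ∀ X, g X ξ = ε * η X)
    -- covariant derivatives in an (ε)-para Sasakian manifold:
    (nablaφ : V → V → V) (nablaη : V → V → ℝ) (nablaξ : V → V)
    (hnφ : ∀ X Y, nablaφ X Y = -(g (φ X) (φ Y)) • ξ - (ε * η Y) • φ (φ X))
    (hnη : ∀ X Y, nablaη X Y = g (φ X) Y)
    (hnξ : ∀ X, nablaξ X = ε • φ X)
    -- Einstein like: Q X = a X + b φX + εc η(X) ξ, and Leibniz rule for ∇Q: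
    (b c : ℝ)
    (nablaQ : V → V → V)
    (hLeib : ∀ Y X, nablaQ Y X =
      b • nablaφ Y X + (ε * c * nablaη Y X) • ξ + (ε * c * η X) • nablaξ Y) :
    ∀ Y X, nablaQ Y X = -(ε * b * η X) • Y + (c * η X) • φ Y
      - (b * g X Y - 2 * ε * b * η X * η Y - ε * c * g (φ X) Y) • ξ := by
  intro Y X
  have hε2 : ε * ε = 1 := mul_self_eq_one_iff.mpr hε
  have hφX : g (φ Y) X = g (φ X) Y := by
    rw [LinearMap.BilinForm.isSelfAdjoint_of_paracontact_metric hsym hφ2 hηφ hmetric hgξ, hsym]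
  rw [hLeib, hnφ, hnη, hnξ, hφ2, hmetric, hφX, hsym Y X]
  match_scalars
  · ring
  · ring
  · linear_combination (c * η X) * hε2

/-- In an Einstein like (ε)-para Sasakian manifold, the Ricci operator
`Q` (with `QX = aX + bφX + εc η(X)ξ`) satisfies
`(∇_Y Q)X = −εb η(X)Y + c η(X)φY − (b g(X,Y) − 2εb η(X)η(Y) − εc g(φX,Y))ξ`.
The covariant derivatives `∇φ`, `∇η`, `∇ξ` are the (ε)-para Sasakian ones, and
`∇Q` obeys the Leibniz rule coming from `QX = aX + bφX + εc η(X)ξ`. -/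
theorem einstein_like_epsPS_nabla_Q {V : Type*} [AddCommGroup V] [Module ℝ V]
    (φ : V →ₗ[ℝ] V) (ξ : V) (η : V →ₗ[ℝ] ℝ) (g : LinearMap.BilinForm ℝ V)
    (ε : ℝ) (hε : ε = 1 ∨ ε = -1)
    (hsym : ∀ X Y, g X Y = g Y X)
    (hφ2 : ∀ X, φ (φ X) = X - η X • ξ)
    (hηξ : η ξ = 1) (hφξ : φ ξ = 0) (hηφ : ∀ X, η (φ X) = 0)
    (hmetric : ∀ X Y, g (φ X) (φ Y) = g X Y - ε * η X * η Y)
    (hgξ : ∀ X, g X ξ = ε * η X)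
    -- covariant derivatives in an (ε)-para Sasakian manifold:
    (nablaφ : V → V → V) (nablaη : V → V → ℝ) (nablaξ : V → V)
    (hnφ : ∀ X Y, nablaφ X Y = -(g (φ X) (φ Y)) • ξ - (ε * η Y) • φ (φ X))
    (hnη : ∀ X Y, nablaη X Y = g (φ X) Y)
    (hnξ : ∀ X, nablaξ X = ε • φ X)
    -- Einstein like: Q X = a X + b φX + εc η(X) ξ, and Leibniz rule for ∇Q:
    (Q : V → V) (a b c : ℝ)
    (hQ : ∀ X, Q X = a • X + b • φ X + (ε * c * η X) • ξ)
    (nablaQ : V → V → V)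
    (hLeib : ∀ Y X, nablaQ Y X =
      b • nablaφ Y X + (ε * c * nablaη Y X) • ξ + (ε * c * η X) • nablaξ Y) :
    ∀ Y X, nablaQ Y X = -(ε * b * η X) • Y + (c * η X) • φ Y
      - (b * g X Y - 2 * ε * b * η X * η Y - ε * c * g (φ X) Y) • ξ :=
  einstein_like_epsPS_nabla_Q_general φ ξ η g ε hε hsym hφ2 hηφ hmetric hgξ nablaφ nablaη nablaξ hnφ
    hnη hnξ b c nablaQ hLeib
end

section
/- In an n-dimensional (ε)-para Sasakian manifold, the Ricci tensor satisfies S(Y, φZ) = C¹₁(φR)(Y,Z) + ε(n−2)Φ(Y,Z) + ( 2η(Y)η(Z) − ε g(Y,Z) ) trace(φ), where C¹₁(φR) denotes the contraction of the (1,3)-tensor (X,Y,Z) ↦ φR(X,Y)Z over X. -/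
/-!
Contract the curvature identity for `R(X,Y)φZ` over `X` with the frame. Each term is of the
form `∑ᵢ εᵢ g(A, eᵢ) f(eᵢ) = f(A)` for a linear form `f`, so the contractions evaluate to
`g(φY,Z)`, `η ξ = 1`, `g(φξ,Z) = 0`, `η(φY) = 0` or `trace(φ)`. The identity term gives
`∑ᵢ εᵢ g(eᵢ,eᵢ) = n`, because `εⱼ g(eⱼ,eⱼ)` is the `j`-th coordinate of `eⱼ`.
-/

namespace LinearMap.BilinForm

variable {ι V : Type*} [Fintype ι] [AddCommGroup V] [Module ℝ V]
  (g : LinearMap.BilinForm ℝ V) (e : ι → V) (εs : ι → ℝ)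

theorem sum_mul_apply_of_frame (hcomplete : ∀ X : V, X = ∑ i, (εs i * g X (e i)) • e i)
    (f : V →ₗ[ℝ] ℝ) (X : V) : ∑ i, εs i * g X (e i) * f (e i) = f X := by
  conv_rhs => rw [hcomplete X]
  simp only [map_sum, map_smul, smul_eq_mul, mul_assoc]

theorem sum_mul_self_of_frame (b : Module.Basis ι ℝ V)
    (hcomplete : ∀ X : V, X = ∑ i, (εs i * g X (b i)) • b i) :
    ∑ i, εs i * g (b i) (b i) = Fintype.card ι := by
  classical
  have hcoord (j : ι) : εs j * g (b j) (b j) = 1 := by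
    simpa [Finsupp.single_apply] using sum_mul_apply_of_frame g b εs hcomplete (b.coord j) (b j)
  simp [hcoord]

end LinearMap.BilinForm

open LinearMap.BilinForm in
theorem epsPS_S_phi_identity_general {V : Type*} [AddCommGroup V] [Module ℝ V]
    (φ : V →ₗ[ℝ] V) (ξ : V) (η : V →ₗ[ℝ] ℝ) (g : LinearMap.BilinForm ℝ V)
    (ε : ℝ) (n : ℕ)
    (hηξ : η ξ = 1) (hφξ : φ ξ = 0) (hηφ : ∀ X, η (φ X) = 0)
    -- pseudo-orthonormal frame
    (e : Module.Basis (Fin n) ℝ V) (εs : Fin n → ℝ)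
    (hcomplete : ∀ X : V, X = ∑ i, (εs i * g X (e i)) • e i)
    -- the curvature identity R(X,Y)φZ = φR(X,Y)Z + ... of an (ε)-para Sasakian manifold
    (R : V → V → V → V)
    (hRφ : ∀ X Y Z, R X Y (φ Z) = φ (R X Y Z)
      + (ε * g (φ Y) Z) • X - (ε * g (φ X) Z) • Y
      - (2 * ε * g (φ Y) Z * η X) • ξ + (2 * ε * g (φ X) Z * η Y) • ξ
      - (ε * g Y Z) • φ X + (ε * g X Z) • φ Y
      + (2 * η Y * η Z) • φ X - (2 * η X * η Z) • φ Y) :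
    ∀ Y Z, (∑ i, εs i * g (R (e i) Y (φ Z)) (e i)) =
      (∑ i, εs i * g (φ (R (e i) Y Z)) (e i))
      + ε * ((n : ℝ) - 2) * g (φ Y) Z
      + (2 * η Y * η Z - ε * g Y Z) * (∑ i, εs i * g (φ (e i)) (e i)) := by
  intro Y Z
  have contract := sum_mul_apply_of_frame g e εs hcomplete
  have expand (i : Fin n) : εs i * g (R (e i) Y (φ Z)) (e i) =
      εs i * g (φ (R (e i) Y Z)) (e i)
      + ε * g (φ Y) Z * (εs i * g (e i) (e i))
      - ε * (εs i * g Y (e i) * (g.flip Z ∘ₗ φ) (e i))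
      - 2 * ε * g (φ Y) Z * (εs i * g ξ (e i) * η (e i))
      + 2 * ε * η Y * (εs i * g ξ (e i) * (g.flip Z ∘ₗ φ) (e i))
      + (2 * η Y * η Z - ε * g Y Z) * (εs i * g (φ (e i)) (e i))
      + ε * (εs i * g (φ Y) (e i) * g.flip Z (e i))
      - 2 * η Z * (εs i * g (φ Y) (e i) * η (e i)) := by
    simp only [hRφ, map_add, map_sub, map_smul, LinearMap.add_apply, LinearMap.sub_apply,
      LinearMap.smul_apply, LinearMap.comp_apply, LinearMap.BilinForm.flip_apply, smul_eq_mul]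
    ring
  simp only [Finset.sum_congr rfl fun i _ => expand i, Finset.sum_add_distrib,
    Finset.sum_sub_distrib, ← Finset.mul_sum, contract, sum_mul_self_of_frame g εs e hcomplete]
  simp only [LinearMap.comp_apply, LinearMap.BilinForm.flip_apply, hηξ, hφξ, hηφ, map_zero,
    Fintype.card_fin]
  ring

/-- In an n-dimensional (ε)-para Sasakian manifold,
`S(Y, φZ) = C¹₁(φR)(Y,Z) + ε(n−2)Φ(Y,Z) + (2η(Y)η(Z) − ε g(Y,Z)) trace(φ)`,
where `S`, `C¹₁(φR)` and `trace(φ)` are the contractions computed with a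
pseudo-orthonormal frame `e` with signs `εs`, and `Φ(X,Y) = g(φX,Y)`. -/
theorem epsPS_S_phi_identity {V : Type*} [AddCommGroup V] [Module ℝ V]
    (φ : V →ₗ[ℝ] V) (ξ : V) (η : V →ₗ[ℝ] ℝ) (g : LinearMap.BilinForm ℝ V)
    (ε : ℝ) (hε : ε = 1 ∨ ε = -1) (n : ℕ)
    (hsym : ∀ X Y, g X Y = g Y X)
    (hφ2 : ∀ X, φ (φ X) = X - η X • ξ)
    (hηξ : η ξ = 1) (hφξ : φ ξ = 0) (hηφ : ∀ X, η (φ X) = 0)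
    (hmetric : ∀ X Y, g (φ X) (φ Y) = g X Y - ε * η X * η Y)
    (hgξ : ∀ X, g X ξ = ε * η X)
    -- pseudo-orthonormal frame
    (e : Module.Basis (Fin n) ℝ V) (εs : Fin n → ℝ) (hεs : ∀ i, εs i = 1 ∨ εs i = -1)
    (hON : ∀ i j, g (e i) (e j) = if i = j then εs i else 0)
    (hcomplete : ∀ X : V, X = ∑ i, (εs i * g X (e i)) • e i)
    -- the curvature identity R(X,Y)φZ = φR(X,Y)Z + ... of an (ε)-para Sasakian manifold
    (R : V → V → V → V)
    (hRφ : ∀ X Y Z, R X Y (φ Z) = φ (R X Y Z)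
      + (ε * g (φ Y) Z) • X - (ε * g (φ X) Z) • Y
      - (2 * ε * g (φ Y) Z * η X) • ξ + (2 * ε * g (φ X) Z * η Y) • ξ
      - (ε * g Y Z) • φ X + (ε * g X Z) • φ Y
      + (2 * η Y * η Z) • φ X - (2 * η X * η Z) • φ Y) :
    ∀ Y Z, (∑ i, εs i * g (R (e i) Y (φ Z)) (e i)) =
      (∑ i, εs i * g (φ (R (e i) Y Z)) (e i))
      + ε * ((n : ℝ) - 2) * g (φ Y) Z
      + (2 * η Y * η Z - ε * g Y Z) * (∑ i, εs i * g (φ (e i)) (e i)) :=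
  epsPS_S_phi_identity_general φ ξ η g ε n hηξ hφξ hηφ e εs hcomplete R hRφ
end

section
/- Let M be a non-degenerate hypersurface of an indefinite locally Riemannian product manifold with induced (ε)-almost paracontact structure (φ, ξ, η, g) arising from JX = φX + η(X)N and JN = ξ. Then the induced Levi-Civita connection satisfies (∇_X φ)Y = η(Y)AX + ε g(AX,Y)ξ, (∇_X η)Y = −ε g(AX, φY), and ∇_X ξ = −φAX, where A is the shape operator. -/
/-!
Both sides of the parallelism `∇̃_X (J Y) = J (∇̃_X Y)` are expanded with the Gauss and
Weingarten formulas and `J = φ + η ⊗ N` into a tangential part plus a multiple of `N`.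
Since `N` is non-null and orthogonal to the tangent space, these components are unique,
and comparing them gives the formulas for `∇φ` and `∇η`; the case `Y = N` gives `∇ξ`.
-/

theorem LinearMap.BilinForm.eq_and_eq_of_add_smul_eq_add_smul {K W : Type*} [Field K]
    [AddCommGroup W] [Module K W] {G : LinearMap.BilinForm K W} {T : Submodule K W} {N : W}
    (hN : G N N ≠ 0) (hT : ∀ X ∈ T, G X N = 0) ⦃t t' : W⦄ (ht : t ∈ T) (ht' : t' ∈ T)
    ⦃a a' : K⦄ (h : t + a • N = t' + a' • N) : t = t' ∧ a = a' := by
  have ha : a = a' := by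
    have hG := congrArg (G · N) h
    simp only [map_add, map_smul, LinearMap.add_apply, LinearMap.smul_apply, smul_eq_mul,
      hT t ht, hT t' ht', zero_add] at hG
    exact mul_right_cancel₀ hN hG
  subst ha
  exact ⟨add_right_cancel h, rfl⟩

theorem hypersurface_induced_connection_general {W : Type*} [AddCommGroup W] [Module ℝ W]
    (J : W →ₗ[ℝ] W) (G : LinearMap.BilinForm ℝ W)
    (T : Submodule ℝ W) (N : W) (ε : ℝ) (hε : ε = 1 ∨ ε = -1)
    (hGNN : G N N = ε) (hNT : ∀ X ∈ T, G X N = 0)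
    (hξT : J N ∈ T)
    (φ : W →ₗ[ℝ] W) (η : W →ₗ[ℝ] ℝ)
    (hφT : ∀ X ∈ T, φ X ∈ T)
    (hdec : ∀ X ∈ T, J X = φ X + η X • N)
    -- ambient and induced Levi-Civita connections, shape operator
    (nablaAmb : W → W → W) (nabla : W → W → W) (A : W →ₗ[ℝ] W)
    (hAT : ∀ X ∈ T, A X ∈ T)
    (hnablaT : ∀ X ∈ T, ∀ Y ∈ T, nabla X Y ∈ T)
    (haddAmb : ∀ X Y Z, nablaAmb X (Y + Z) = nablaAmb X Y + nablaAmb X Z)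
    -- ∇̃J = 0
    (hparJ : ∀ X Y, nablaAmb X (J Y) = J (nablaAmb X Y))
    -- Gauss and Weingarten formulas
    (hGauss : ∀ X ∈ T, ∀ Y ∈ T, nablaAmb X Y = nabla X Y + (ε * G (A X) Y) • N)
    (hWein : ∀ X ∈ T, nablaAmb X N = -(A X))
    -- directional derivative of the function η(Y) and Leibniz rule along N
    (Dη : W → W → ℝ)
    (hLeibN : ∀ X ∈ T, ∀ Y ∈ T,
      nablaAmb X (η Y • N) = Dη X Y • N + η Y • nablaAmb X N) :
    (∀ X ∈ T, ∀ Y ∈ T,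
      nabla X (φ Y) - φ (nabla X Y) = η Y • A X + (ε * G (A X) Y) • (J N)) ∧
    (∀ X ∈ T, ∀ Y ∈ T, Dη X Y - η (nabla X Y) = -(ε * G (A X) (φ Y))) ∧
    (∀ X ∈ T, nabla X (J N) = -φ (A X)) := by
  have hN : G N N ≠ 0 := by rcases hε with rfl | rfl <;> norm_num [hGNN]
  have components := LinearMap.BilinForm.eq_and_eq_of_add_smul_eq_add_smul hN hNT
  have hφη : ∀ X ∈ T, ∀ Y ∈ T,
      nabla X (φ Y) - η Y • A X = φ (nabla X Y) + (ε * G (A X) Y) • J N ∧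
      ε * G (A X) (φ Y) + Dη X Y = η (nabla X Y) := by
    intro X hX Y hY
    have hnXY := hnablaT X hX Y hY
    refine components (sub_mem (hnablaT X hX _ (hφT Y hY)) (T.smul_mem _ (hAT X hX)))
      (add_mem (hφT _ hnXY) (T.smul_mem _ hξT)) ?_
    have h := hparJ X Y
    rw [hdec Y hY, haddAmb, hGauss X hX _ (hφT Y hY), hLeibN X hX Y hY, hWein X hX,
      hGauss X hX Y hY, map_add, map_smul, hdec _ hnXY] at h
    linear_combination (norm := module) h
  refine ⟨fun X hX Y hY ↦ ?_, fun X hX Y hY ↦ ?_, fun X hX ↦ ?_⟩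
  · linear_combination (norm := module) (hφη X hX Y hY).1
  · linarith [(hφη X hX Y hY).2]
  · have h := hparJ X N
    rw [hGauss X hX _ hξT, hWein X hX, map_neg, hdec _ (hAT X hX), neg_add, ← neg_smul] at h
    exact (components (hnablaT X hX _ hξT) (neg_mem (hφT _ (hAT X hX))) h).1

/-- For a non-degenerate hypersurface `M` (tangent spaces `T`) of an
indefinite locally Riemannian product manifold `(W, J, G)` with induced
(ε)-almost paracontact structure (`JN = ξ`, `JX = φX + η(X)N`), the induced
connection satisfies `(∇_X φ)Y = η(Y)AX + ε g(AX,Y)ξ`,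
`(∇_X η)Y = −ε g(AX, φY)` and `∇_X ξ = −φAX`, where `A` is the shape operator.
Here `Dη X Y` denotes the directional derivative `X(η(Y))`, so that
`(∇_X η)Y = Dη X Y − η(∇_X Y)`. -/
theorem hypersurface_induced_connection {W : Type*} [AddCommGroup W] [Module ℝ W]
    (J : W →ₗ[ℝ] W) (G : LinearMap.BilinForm ℝ W)
    (hGsym : ∀ X Y, G X Y = G Y X)
    (hJ2 : ∀ X, J (J X) = X)
    (hGJ : ∀ X Y, G (J X) (J Y) = G X Y)
    (T : Submodule ℝ W) (N : W) (ε : ℝ) (hε : ε = 1 ∨ ε = -1)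
    (hGNN : G N N = ε) (hNT : ∀ X ∈ T, G X N = 0)
    (hξT : J N ∈ T)
    (φ : W →ₗ[ℝ] W) (η : W →ₗ[ℝ] ℝ)
    (hφT : ∀ X ∈ T, φ X ∈ T)
    (hdec : ∀ X ∈ T, J X = φ X + η X • N)
    -- ambient and induced Levi-Civita connections, shape operator
    (nablaAmb : W → W → W) (nabla : W → W → W) (A : W →ₗ[ℝ] W)
    (hAT : ∀ X ∈ T, A X ∈ T)
    (hnablaT : ∀ X ∈ T, ∀ Y ∈ T, nabla X Y ∈ T)
    (haddAmb : ∀ X Y Z, nablaAmb X (Y + Z) = nablaAmb X Y + nablaAmb X Z)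
    -- ∇̃J = 0
    (hparJ : ∀ X Y, nablaAmb X (J Y) = J (nablaAmb X Y))
    -- Gauss and Weingarten formulas
    (hGauss : ∀ X ∈ T, ∀ Y ∈ T, nablaAmb X Y = nabla X Y + (ε * G (A X) Y) • N)
    (hWein : ∀ X ∈ T, nablaAmb X N = -(A X))
    -- directional derivative of the function η(Y) and Leibniz rule along N
    (Dη : W → W → ℝ)
    (hLeibN : ∀ X ∈ T, ∀ Y ∈ T,
      nablaAmb X (η Y • N) = Dη X Y • N + η Y • nablaAmb X N) :
    (∀ X ∈ T, ∀ Y ∈ T,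
      nabla X (φ Y) - φ (nabla X Y) = η Y • A X + (ε * G (A X) Y) • (J N)) ∧
    (∀ X ∈ T, ∀ Y ∈ T, Dη X Y - η (nabla X Y) = -(ε * G (A X) (φ Y))) ∧
    (∀ X ∈ T, nabla X (J N) = -φ (A X)) :=
  hypersurface_induced_connection_general J G T N ε hε hGNN hNT hξT φ η hφT hdec nablaAmb nabla A
    hAT hnablaT haddAmb hparJ hGauss hWein Dη hLeibN
end

section
/- Let M be an orientable non-degenerate hypersurface of an indefinite locally Riemannian product manifold, with induced (ε)-almost paracontact metric structure (φ, ξ, η, g). Then M is (ε)-para Sasakian if and only if its shape operator satisfies A = −εI + ε η⊗ξ. -/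
/-!
Specialising the Gauss-type formula for `∇φ` to `Y = ξ` gives `A X + ε² η(AX) ξ = -ε φ² X`;
applying `η` kills the right-hand side, so `(1 + ε²) η(AX) = 0` and the shape operator is forced.
Conversely, for `A = -εI + ε η⊗ξ` both formulas for `∇φ` agree once `φ²`, `g(φ·, φ·)` and
`g(ξ, ·)` are expanded and `ε² = 1` is used.
-/

section ShapeOperator

variable {V : Type*} [AddCommGroup V] [Module ℝ V] {φ : V →ₗ[ℝ] V} {ξ : V} {η : V →ₗ[ℝ] ℝ}
  {g : LinearMap.BilinForm ℝ V} {ε : ℝ} {A : V →ₗ[ℝ] V}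

theorem shape_eq_of_covDeriv_phi_xi (hφ2 : ∀ X, φ (φ X) = X - η X • ξ) (hηξ : η ξ = 1)
    (hφξ : φ ξ = 0) (hgξ : ∀ X, g X ξ = ε * η X) (X : V)
    (h : η ξ • A X + (ε * g (A X) ξ) • ξ = -(g (φ X) (φ ξ)) • ξ - (ε * η ξ) • φ (φ X)) :
    A X = -ε • X + (ε * η X) • ξ := by
  rw [hηξ, hφξ, hgξ, hφ2, map_zero, one_smul, mul_one] at h
  have hηA : η (A X) = 0 := by
    have hη := congrArg η h
    simp only [map_add, map_sub, map_smul, smul_eq_mul, hηξ] at hη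
    have hcoeff : (1 + ε * ε) * η (A X) = 0 := by linear_combination hη
    have hpos : 1 + ε * ε ≠ 0 := (add_pos_of_pos_of_nonneg one_pos (mul_self_nonneg ε)).ne'
    exact (mul_eq_zero.mp hcoeff).resolve_left hpos
  rw [hηA, mul_zero, mul_zero, zero_smul, add_zero] at h
  rw [h]
  module

theorem covDeriv_phi_eq_of_shape_eq (hε : ε * ε = 1) (hsym : ∀ X Y, g X Y = g Y X)
    (hφ2 : ∀ X, φ (φ X) = X - η X • ξ)
    (hmetric : ∀ X Y, g (φ X) (φ Y) = g X Y - ε * η X * η Y)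
    (hgξ : ∀ X, g X ξ = ε * η X) (hA : ∀ X, A X = -ε • X + (ε * η X) • ξ) (X Y : V) :
    η Y • A X + (ε * g (A X) Y) • ξ = -(g (φ X) (φ Y)) • ξ - (ε * η Y) • φ (φ X) := by
  have hξg : g ξ Y = ε * η Y := by rw [hsym, hgξ]
  rw [hA X, hmetric, hφ2]
  simp only [map_add, map_smul, LinearMap.add_apply, LinearMap.smul_apply, smul_eq_mul, hξg]
  match_scalars
  · ring
  · linear_combination (ε * η X * η Y - g X Y) * hε

end ShapeOperator

theorem hypersurface_epsPS_iff_shape_general {V : Type*} [AddCommGroup V] [Module ℝ V]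
    (φ : V →ₗ[ℝ] V) (ξ : V) (η : V →ₗ[ℝ] ℝ) (g : LinearMap.BilinForm ℝ V)
    (ε : ℝ) (hε : ε = 1 ∨ ε = -1)
    (hsym : ∀ X Y, g X Y = g Y X)
    (hφ2 : ∀ X, φ (φ X) = X - η X • ξ)
    (hηξ : η ξ = 1) (hφξ : φ ξ = 0)
    (hmetric : ∀ X Y, g (φ X) (φ Y) = g X Y - ε * η X * η Y)
    (hgξ : ∀ X, g X ξ = ε * η X)
    (nabla : V → V → V) (A : V →ₗ[ℝ] V)
    (hindφ : ∀ X Y, nabla X (φ Y) - φ (nabla X Y) = η Y • A X + (ε * g (A X) Y) • ξ) :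
    (∀ X Y, nabla X (φ Y) - φ (nabla X Y) =
        -(g (φ X) (φ Y)) • ξ - (ε * η Y) • φ (φ X)) ↔
      (∀ X, A X = -ε • X + (ε * η X) • ξ) := by
  have hε2 : ε * ε = 1 := by rcases hε with rfl | rfl <;> norm_num
  constructor
  · intro hPS X
    exact shape_eq_of_covDeriv_phi_xi hφ2 hηξ hφξ hgξ X ((hindφ X ξ).symm.trans (hPS X ξ))
  · intro hA X Y
    rw [hindφ]
    exact covDeriv_phi_eq_of_shape_eq hε2 hsym hφ2 hmetric hgξ hA X Y

/-- Let `M` be an orientable non-degenerate hypersurface of an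
indefinite locally Riemannian product manifold with induced (ε)-almost paracontact
metric structure `(φ, ξ, η, g)`; the induced connection satisfies
`(∇_X φ)Y = η(Y)AX + ε g(AX,Y)ξ` and `∇_X ξ = −φAX`. Then `M` is (ε)-para Sasakian
(i.e. `(∇_X φ)Y = −g(φX,φY)ξ − ε η(Y)φ²X`) iff `A = −εI + ε η⊗ξ`. -/
theorem hypersurface_epsPS_iff_shape {V : Type*} [AddCommGroup V] [Module ℝ V]
    (φ : V →ₗ[ℝ] V) (ξ : V) (η : V →ₗ[ℝ] ℝ) (g : LinearMap.BilinForm ℝ V)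
    (ε : ℝ) (hε : ε = 1 ∨ ε = -1)
    (hsym : ∀ X Y, g X Y = g Y X)
    (hnondeg : ∀ X, (∀ Y, g X Y = 0) → X = 0)
    (hφ2 : ∀ X, φ (φ X) = X - η X • ξ)
    (hηξ : η ξ = 1) (hφξ : φ ξ = 0) (hηφ : ∀ X, η (φ X) = 0)
    (hmetric : ∀ X Y, g (φ X) (φ Y) = g X Y - ε * η X * η Y)
    (hgξ : ∀ X, g X ξ = ε * η X)
    (nabla : V → V → V) (A : V →ₗ[ℝ] V)
    (hAsym : ∀ X Y, g (A X) Y = g X (A Y))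
    (hindφ : ∀ X Y, nabla X (φ Y) - φ (nabla X Y) = η Y • A X + (ε * g (A X) Y) • ξ)
    (hindξ : ∀ X, nabla X ξ = -φ (A X)) :
    (∀ X Y, nabla X (φ Y) - φ (nabla X Y) =
        -(g (φ X) (φ Y)) • ξ - (ε * η Y) • φ (φ X)) ↔
      (∀ X, A X = -ε • X + (ε * η X) • ξ) :=
  hypersurface_epsPS_iff_shape_general φ ξ η g ε hε hsym hφ2 hηξ hφξ hmetric hgξ nabla A hindφ
end
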